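/- Let 0 ≤ δ ≤ ε < 1, n ≥ 0 an integer, and let α_1,…,α_n, β, γ be reals with 0 ≤ γ ≤ 1 and β ≥ (Σα_i² − 1 − γ²)/(1−ε). Then Σ_{i=1}^n (1−α_i)² + (ε−δ)β + γ ≥ ρ_n + (1 − (ε−δ)/(1−ε))·γ, where ρ_n = n(ε−δ)/(1−δ) − (ε−δ)/(1−ε). -/

import Mathlib

/-! With `t = (ε - δ) / (1 - ε)`, the constraint on `β` gives
`(ε - δ) β ≥ t (∑ αᵢ² - 1 - γ²)`, so the left side is at least
`∑ ((1 - αᵢ)² + t αᵢ²) - t - t γ² + γ`. Each summand is a convex quadratic in `αᵢ` with minimum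
`t / (1 + t) = (ε - δ) / (1 - δ)`, and `γ - t γ² ≥ (1 - t) γ` on `[0, 1]`. -/

open Finset

theorem div_one_add_le_one_sub_sq_add_mul_sq {t : ℝ} (ht : 0 < 1 + t) (a : ℝ) :
    t / (1 + t) ≤ (1 - a) ^ 2 + t * a ^ 2 := by
  rw [div_le_iff₀ ht, ← sub_nonneg]
  have hsq : ((1 - a) ^ 2 + t * a ^ 2) * (1 + t) - t = ((1 + t) * a - 1) ^ 2 := by ring
  exact hsq ▸ sq_nonneg _

theorem card_mul_div_one_add_le_sum_one_sub_sq_add_mul_sum_sq {ι : Type*} (s : Finset ι)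
    {t : ℝ} (ht : 0 < 1 + t) (α : ι → ℝ) :
    #s * (t / (1 + t)) ≤ ∑ i ∈ s, (1 - α i) ^ 2 + t * ∑ i ∈ s, α i ^ 2 := by
  rw [mul_sum, ← sum_add_distrib, ← nsmul_eq_mul, ← sum_const]
  exact sum_le_sum fun i _ => div_one_add_le_one_sub_sq_add_mul_sq ht (α i)

theorem stmt_14_general (ε δ : ℝ) (hδε : δ ≤ ε) (hε1 : ε < 1)
    (n : ℕ) (α : Fin n → ℝ) (β γ : ℝ) (hγ0 : 0 ≤ γ) (hγ1 : γ ≤ 1)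
    (hβ : β ≥ ((∑ i, (α i) ^ 2) - 1 - γ ^ 2) / (1 - ε)) :
    ∑ i, (1 - α i) ^ 2 + (ε - δ) * β + γ
      ≥ ((n : ℝ) * (ε - δ) / (1 - δ) - (ε - δ) / (1 - ε))
        + (1 - (ε - δ) / (1 - ε)) * γ := by
  have hε : 0 < 1 - ε := by linarith
  set t := (ε - δ) / (1 - ε) with ht_def
  have ht : 0 ≤ t := div_nonneg (by linarith) hε.le
  have hρ : (n : ℝ) * (ε - δ) / (1 - δ) = n * (t / (1 + t)) := by
    rw [ht_def]
    field_simp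
    ring
  have hα := card_mul_div_one_add_le_sum_one_sub_sq_add_mul_sum_sq univ (t := t) (by linarith) α
  rw [card_univ, Fintype.card_fin] at hα
  have hβt : t * ((∑ i, α i ^ 2) - 1 - γ ^ 2) ≤ (ε - δ) * β := by
    calc t * ((∑ i, α i ^ 2) - 1 - γ ^ 2)
        = (ε - δ) * (((∑ i, α i ^ 2) - 1 - γ ^ 2) / (1 - ε)) := by rw [ht_def]; ring
      _ ≤ (ε - δ) * β := mul_le_mul_of_nonneg_left hβ (by linarith)
  have hγ : t * γ ^ 2 ≤ t * γ :=
    mul_le_mul_of_nonneg_left (by nlinarith) ht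
  rw [hρ]
  linarith

theorem stmt_14 (ε δ : ℝ) (hδ0 : 0 ≤ δ) (hδε : δ ≤ ε) (hε1 : ε < 1)
    (n : ℕ) (α : Fin n → ℝ) (β γ : ℝ) (hγ0 : 0 ≤ γ) (hγ1 : γ ≤ 1)
    (hβ : β ≥ ((∑ i, (α i) ^ 2) - 1 - γ ^ 2) / (1 - ε)) :
    ∑ i, (1 - α i) ^ 2 + (ε - δ) * β + γ
      ≥ ((n : ℝ) * (ε - δ) / (1 - δ) - (ε - δ) / (1 - ε))
        + (1 - (ε - δ) / (1 - ε)) * γ :=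
  stmt_14_general ε δ hδε hε1 n α β γ hγ0 hγ1 hβ
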